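/- (Non-archimedean stationary phase.) Let X ⊂ K^n and V ⊂ K^r be open sets, let p : X × V → K be strict C¹, and let φ ∈ S(X) with support Supp(φ). Assume there is δ > 0 such that |grad_x p(x,η)| ≥ δ for all (x,η) ∈ Supp(φ) × V, and that |R(x,y,η)| is bounded for x and x+y in Supp(φ) and η ∈ V, where R is defined by p(x+y,η) = p(x,η) + (grad_x p(x,η)|y) + (R(x,y,η)y|y). Then there is an integer r₀ such that for every η ∈ V, the function λ ↦ I_η(p,φ)(λ) := ∫_X φ(x)ψ_K(λ p(x,η)) dx on K^× vanishes for all λ outside the ball B_{r₀}, i.e. its support is contained in B_{r₀}, with r₀ independent of η ∈ V. -/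

import Mathlib

open MeasureTheory Filter Topology
open scoped BigOperators Classical

noncomputable section

/-- Axiomatization of a non-archimedean local field: a topological field equipped with a
surjective discrete valuation `ord : K → ℤ ∪ {∞}` whose closed balls are compact open and
form a neighborhood basis at every point. -/
class NALocalField (K : Type) [Field K] [TopologicalSpace K] where
  ord : K → WithTop ℤ
  ord_eq_top_iff : ∀ x : K, ord x = ⊤ ↔ x = 0
  ord_mul : ∀ x y : K, ord (x * y) = ord x + ord y
  ord_add : ∀ x y : K, min (ord x) (ord y) ≤ ord (x + y)
  ord_surjective : ∀ m : ℤ, ∃ x : K, ord x = (m : WithTop ℤ)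
  isOpen_ball : ∀ m : ℤ, IsOpen {x : K | (m : WithTop ℤ) ≤ ord x}
  isCompact_ball : ∀ m : ℤ, IsCompact {x : K | (m : WithTop ℤ) ≤ ord x}
  nhds_basis : ∀ x : K, (nhds x).HasBasis (fun _ : ℤ => True)
      (fun m => {y : K | (m : WithTop ℤ) ≤ ord (y - x)})

variable {K : Type} [Field K] [TopologicalSpace K] [IsTopologicalRing K] [NALocalField K]

/-- The minimum of the valuations of the coordinates of a vector; `|v| = q^{-ordVec v}`. -/
def ordVec {ι : Type} [Fintype ι] (v : ι → K) : WithTop ℤ :=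
  Finset.univ.inf fun i => NALocalField.ord (v i)

/-- The ball of valuative radius `r` around `x` in `K^ι`. -/
def pball {ι : Type} [Fintype ι] (x : ι → K) (r : ℤ) : Set (ι → K) :=
  {y | (r : WithTop ℤ) ≤ ordVec (x - y)}

section SB
variable {α : Type} [TopologicalSpace α]

/-- Schwartz–Bruhat functions on a subset `X ⊆ α`: locally constant compactly supported
`ℂ`-valued functions on `X` (as functions on the subtype). -/
def IsSB (X : Set α) (f : X → ℂ) : Prop :=
  IsLocallyConstant f ∧ HasCompactSupport f

/-- A distribution on `X`: a functional which is `ℂ`-linear on Schwartz–Bruhat functions. -/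
def IsDistribution (X : Set α) (u : (X → ℂ) → ℂ) : Prop :=
  (∀ (c : ℂ) (f : X → ℂ), IsSB X f → u (c • f) = c * u f) ∧
  (∀ f g : X → ℂ, IsSB X f → IsSB X g → u (f + g) = u f + u g)

/-- Schwartz–Bruhat functions on an open subset `U ⊆ α`, realized as locally constant
compactly supported functions on `α` whose support is contained in `U`. -/
def IsSBOn (U : Set α) (f : α → ℂ) : Prop :=
  IsLocallyConstant f ∧ HasCompactSupport f ∧ tsupport f ⊆ U

/-- A distribution on an open set `U ⊆ α`, in the ambient-function realization. -/
def IsDistributionOn (U : Set α) (u : (α → ℂ) → ℂ) : Prop :=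
  (∀ (c : ℂ) (f : α → ℂ), IsSBOn U f → u (c • f) = c * u f) ∧
  (∀ f g : α → ℂ, IsSBOn U f → IsSBOn U g → u (f + g) = u f + u g)

end SB

/-- `ψ` is an additive character of `K` which is trivial on the maximal ideal and
nontrivial on the ring of integers. -/
def IsStandardChar (ψ : AddChar K ℂ) : Prop :=
  (∀ x : K, (1 : WithTop ℤ) ≤ NALocalField.ord x → ψ x = 1) ∧
  (∃ x : K, (0 : WithTop ℤ) ≤ NALocalField.ord x ∧ ψ x ≠ 1)

section Meas
variable [MeasurableSpace K] [BorelSpace K]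

/-- `μ` is a (normalized) Haar measure on `(K, +)`: it is translation invariant and gives
the valuation ring `O_K` measure `1`. -/
def IsHaar (μ : Measure K) : Prop :=
  (∀ (a : K) (s : Set K), μ ((fun x => a + x) ⁻¹' s) = μ s) ∧
  μ {x : K | (0 : WithTop ℤ) ≤ NALocalField.ord x} = 1

/-- The product (Haar) measure on `K^ι`, giving `O_K^ι` measure `1`. -/
def piHaar (μ : Measure K) (ι : Type) [Fintype ι] : Measure (ι → K) :=
  Measure.pi fun _ => μ

end Meas

/-- `p : X × V → K` is strict `C¹`: at each point of `X × V` it admits a (total)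
derivative, in the valuative strict sense. -/
def StrictC1Pair {n r : ℕ} (p : (Fin n → K) → (Fin r → K) → K)
    (X : Set (Fin n → K)) (V : Set (Fin r → K)) : Prop :=
  ∀ q ∈ X ×ˢ V, ∃ (a : Fin n → K) (b : Fin r → K), ∀ cc : ℤ,
    ∀ᶠ w : ((Fin n → K) × (Fin r → K)) × ((Fin n → K) × (Fin r → K)) in
        nhdsWithin (q, q) ((X ×ˢ V) ×ˢ (X ×ˢ V)),
      (cc : WithTop ℤ) + min (ordVec (w.1.1 - w.2.1)) (ordVec (w.1.2 - w.2.2)) ≤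
        NALocalField.ord (p w.1.1 w.1.2 - p w.2.1 w.2.2 -
          (∑ i, a i * (w.1.1 i - w.2.1 i)) - ∑ j, b j * (w.1.2 j - w.2.2 j))

/-!
Let `l = ord λ`, `m = -(l + δ)` and `W = B_m ⊆ K^n`, a compact open subgroup. When `l` is small
enough, `m` is so large that `φ` is invariant under translation by `W` and, by the bound on `R`,
`λ (R(x,y,η) y | y) ∈ M_K` for `y ∈ W`. Hence, for `φ(x) ≠ 0`, the function
`y ↦ φ(x+y) ψ(λ p(x+y,η))` on `W` is `φ(x) ψ(λ p(x,η))` times the character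
`y ↦ ψ(λ (grad_x p(x,η) | y))` of `W`, which is nontrivial because
`ord (λ grad_x p(x,η)) ≤ l + δ = -m`; so its integral over `W` vanishes. Averaging the integral
over the translations by `W` (Fubini and invariance of Haar measure) then shows that the
integral itself is `0`.
-/

namespace NALocalField

variable {K : Type} [Field K] [TopologicalSpace K] [NALocalField K]

theorem ord_one : ord (1 : K) = 0 := by
  obtain ⟨k, hk⟩ := WithTop.ne_top_iff_exists.1 (mt (ord_eq_top_iff (1 : K)).1 one_ne_zero)
  have h := ord_mul (1 : K) 1
  rw [one_mul, ← hk, ← WithTop.coe_add] at h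
  rw [← hk, WithTop.coe_eq_zero]
  have := WithTop.coe_injective h
  omega

def addValuation : AddValuation K (WithTop ℤ) :=
  AddValuation.of ord ((ord_eq_top_iff 0).2 rfl) ord_one ord_add ord_mul

theorem addValuation_apply (x : K) : addValuation x = ord x := rfl

theorem exists_ord_eq_coe {x : K} (hx : x ≠ 0) : ∃ k : ℤ, ord x = k :=
  WithTop.ne_top_iff_exists.1 (mt (ord_eq_top_iff x).1 hx) |>.imp fun _ h => h.symm

theorem ord_inv_of_ord_eq {x : K} {k : ℤ} (h : ord x = k) :
    ord x⁻¹ = ((-k : ℤ) : WithTop ℤ) := by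
  rw [← addValuation_apply, addValuation.map_inv, addValuation_apply, h]
  rfl

theorem le_ord_sum {ι : Type*} {s : Finset ι} {f : ι → K} {g : WithTop ℤ}
    (hf : ∀ i ∈ s, g ≤ ord (f i)) : g ≤ ord (∑ i ∈ s, f i) :=
  addValuation.map_le_sum hf

variable (K) in
def ball (m : ℤ) : AddSubgroup K where
  carrier := {x | (m : WithTop ℤ) ≤ ord x}
  zero_mem' := by simp [(ord_eq_top_iff (0 : K)).2 rfl]
  add_mem' hx hy := addValuation.map_le_add hx hy
  neg_mem' {x} hx := by simpa [← addValuation_apply, addValuation.map_neg] using hx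

theorem mem_ball {m : ℤ} {x : K} : x ∈ ball K m ↔ (m : WithTop ℤ) ≤ ord x := Iff.rfl

theorem ball_antitone : Antitone (ball K) := fun _ _ h _ hx =>
  le_trans (WithTop.coe_le_coe.2 h) hx

variable (K) in
def piBall (ι : Type*) (m : ℤ) : AddSubgroup (ι → K) :=
  AddSubgroup.pi Set.univ fun _ => ball K m

section PiBall

variable {ι : Type*}

theorem mem_piBall {m : ℤ} {y : ι → K} : y ∈ piBall K ι m ↔ ∀ i, y i ∈ ball K m := by
  simp [piBall, AddSubgroup.mem_pi]

theorem piBall_antitone : Antitone (piBall K ι) := fun _ _ h _ hy =>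
  mem_piBall.2 fun i => ball_antitone h (mem_piBall.1 hy i)

theorem isCompact_piBall (m : ℤ) : IsCompact (piBall K ι m : Set (ι → K)) :=
  isCompact_univ_pi fun _ => isCompact_ball m

theorem isOpen_piBall [Finite ι] (m : ℤ) : IsOpen (piBall K ι m : Set (ι → K)) :=
  isOpen_set_pi Set.finite_univ fun _ _ => isOpen_ball m

theorem hasBasis_nhds_zero_piBall [Finite ι] :
    (𝓝 (0 : ι → K)).HasBasis (fun _ : ℤ => True) fun m => (piBall K ι m : Set (ι → K)) := by
  have hK : (𝓝 (0 : K)).HasBasis (fun _ : ℤ => True) fun m => (ball K m : Set K) := by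
    simpa only [sub_zero] using! nhds_basis (0 : K)
  rw [nhds_pi]
  refine hK.pi_self.to_hasBasis (fun Im _ => ⟨Im.2, trivial, ?_⟩)
    fun m _ => ⟨(Set.univ, m), ⟨Set.finite_univ, trivial⟩, subset_rfl⟩
  exact Set.pi_mono' (fun _ _ => subset_rfl) (Set.subset_univ _)

theorem exists_mem_piBall_dotProduct_eq [Fintype ι] {a : ι → K} {i : ι} {e : ℤ}
    (hi : ord (a i) ≤ e) {z : K} (hz : 0 ≤ ord z) : ∃ y ∈ piBall K ι (-e), a ⬝ᵥ y = z := by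
  have hai : a i ≠ 0 := by
    intro h
    simp [h, (ord_eq_top_iff (0 : K)).2 rfl] at hi
  obtain ⟨k, hk⟩ := exists_ord_eq_coe hai
  refine ⟨Pi.single i (z / a i), mem_piBall.2 fun j => ?_,
    by rw [dotProduct_single, mul_div_cancel₀ z hai]⟩
  rcases eq_or_ne j i with rfl | hj
  · rw [Pi.single_eq_same, mem_ball, div_eq_mul_inv, ord_mul, ord_inv_of_ord_eq hk]
    have hke : k ≤ e := WithTop.coe_le_coe.1 (hk ▸ hi)
    calc ((-e : ℤ) : WithTop ℤ) ≤ 0 + ((-k : ℤ) : WithTop ℤ) := by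
          rw [zero_add]
          exact WithTop.coe_le_coe.2 (neg_le_neg hke)
      _ ≤ ord z + ((-k : ℤ) : WithTop ℤ) := by gcongr
  · rw [Pi.single_eq_of_ne hj]
    exact (ball K _).zero_mem

theorem le_ord_quadratic [Fintype ι] {R : Matrix ι ι K} {C m : ℤ}
    (hR : ∀ i j, (C : WithTop ℤ) ≤ ord (R i j)) {y : ι → K} (hy : y ∈ piBall K ι m) :
    ((C + m + m : ℤ) : WithTop ℤ) ≤ ord (∑ i, (∑ j, R i j * y j) * y i) := by
  have hy' (i : ι) : (m : WithTop ℤ) ≤ ord (y i) := mem_piBall.1 hy i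
  refine le_ord_sum fun i _ => ?_
  rw [ord_mul, WithTop.coe_add]
  refine add_le_add (le_ord_sum fun j _ => ?_) (hy' i)
  rw [ord_mul, WithTop.coe_add]
  exact add_le_add (hR i j) (hy' j)

end PiBall

theorem exists_mem_piBall_mul_dotProduct_eq {ι : Type} [Fintype ι] {a : ι → K} {lam : K}
    {l δ : ℤ} (hlam : ord lam = l) (ha : ordVec a ≤ δ) {z : K} (hz : 0 ≤ ord z) :
    ∃ y ∈ piBall K ι (-(l + δ)), lam * (a ⬝ᵥ y) = z := by
  obtain ⟨i, -, hi⟩ := (Finset.inf_le_iff (WithTop.coe_lt_top δ)).1 ha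
  obtain ⟨y, hy, hyz⟩ := exists_mem_piBall_dotProduct_eq (a := lam • a) (i := i) (e := l + δ)
    (by rw [Pi.smul_apply, smul_eq_mul, ord_mul, hlam, WithTop.coe_add]; gcongr) hz
  exact ⟨y, hy, by rwa [smul_dotProduct, smul_eq_mul] at hyz⟩

instance : FirstCountableTopology K :=
  ⟨fun x => (nhds_basis x).isCountablyGenerated⟩

instance : SigmaCompactSpace K := by
  refine ⟨⟨fun k => ball K (-k), fun k => isCompact_ball _, Set.eq_univ_of_forall fun x => ?_⟩⟩
  obtain ⟨k, hk⟩ : ∃ k : ℕ, (-(k : ℤ) : WithTop ℤ) ≤ ord x := by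
    rcases eq_or_ne x 0 with rfl | hx
    · exact ⟨0, by simp [(ord_eq_top_iff (0 : K)).2 rfl]⟩
    · obtain ⟨e, he⟩ := exists_ord_eq_coe hx
      refine ⟨e.natAbs, ?_⟩
      rw [he]
      exact WithTop.coe_le_coe.2 (by simpa using neg_abs_le e)
  exact Set.mem_iUnion.2 ⟨k, hk⟩

variable [IsTopologicalRing K]

instance : T2Space K := by
  refine IsTopologicalAddGroup.t2Space_of_zero_sep fun x hx => ?_
  obtain ⟨k, hk⟩ := exists_ord_eq_coe hx
  refine ⟨ball K (k + 1), (isOpen_ball _).mem_nhds (ball K _).zero_mem, fun h => ?_⟩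
  have := (mem_ball.1 h).trans_eq hk
  norm_cast at this
  omega

-- `K` is σ-compact, and metrizable as a first countable topological group.
instance : SecondCountableTopology K := by
  let := IsTopologicalAddGroup.rightUniformSpace K
  have := isUniformAddGroup_of_addCommGroup (G := K)
  have := IsUniformAddGroup.uniformity_countably_generated (α := K)
  have := UniformSpace.pseudoMetrizableSpace (X := K)
  infer_instance

theorem hasBasis_nhds_piBall {ι : Type*} [Finite ι] (x : ι → K) :
    (𝓝 x).HasBasis (fun _ : ℤ => True) fun m => (x + ·) '' (piBall K ι m : Set (ι → K)) := by
  rw [← map_add_left_nhds_zero]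
  exact hasBasis_nhds_zero_piBall.map _

theorem _root_.IsLocallyConstant.exists_piBall_forall_add_eq {ι β : Type*} [Finite ι] [Zero β]
    {φ : (ι → K) → β} (hlc : IsLocallyConstant φ) (hcs : HasCompactSupport φ) :
    ∃ m₀ : ℤ, ∀ x, ∀ u ∈ piBall K ι m₀, φ (x + u) = φ x := by
  have hnhds (x : ι → K) := (hasBasis_nhds_piBall x).mem_iff.1
    ((hlc.isOpen_fiber (φ x)).mem_nhds rfl)
  choose r _ hr using hnhds
  obtain ⟨t, -, hcover⟩ := hcs.isCompact.elim_nhds_subcover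
    (fun c => (c + ·) '' (piBall K ι (r c) : Set (ι → K)))
    fun c _ => (hasBasis_nhds_piBall c).mem_of_mem trivial
  obtain ⟨m₀, hm₀⟩ := (t.image r).exists_le
  have hsupp : ∀ z ∈ tsupport φ, ∀ u ∈ piBall K ι m₀, φ (z + u) = φ z := by
    intro z hz u hu
    obtain ⟨c, hc, b, hb, rfl⟩ : ∃ c ∈ t, ∃ b ∈ piBall K ι (r c), c + b = z := by
      simpa only [Set.mem_iUnion, Set.mem_image, exists_prop, SetLike.mem_coe] using hcover hz
    have hu : u ∈ piBall K ι (r c) := piBall_antitone (hm₀ _ (Finset.mem_image_of_mem r hc)) hu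
    rw [hr c ⟨b, hb, rfl⟩, add_assoc, hr c ⟨b + u, add_mem hb hu, rfl⟩]
  refine ⟨m₀, fun x u hu => ?_⟩
  by_cases hx : x ∈ tsupport φ
  · exact hsupp x hx u hu
  by_cases hxu : x + u ∈ tsupport φ
  · simpa using (hsupp _ hxu (-u) (neg_mem hu)).symm
  rw [image_eq_zero_of_notMem_tsupport hx, image_eq_zero_of_notMem_tsupport hxu]

end NALocalField

namespace AddChar

variable {R ι : Type*} [CommRing R] [Fintype ι]

def mulDotProduct (ψ : AddChar R ℂ) (lam : R) (a : ι → R) : AddChar (ι → R) ℂ :=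
  ψ.compAddMonoidHom <| AddMonoidHom.mk' (fun y => lam * (a ⬝ᵥ y)) fun y y' => by
    rw [dotProduct_add, mul_add]

theorem mulDotProduct_apply (ψ : AddChar R ℂ) (lam : R) (a y : ι → R) :
    ψ.mulDotProduct lam a y = ψ (lam * (a ⬝ᵥ y)) := rfl

end AddChar

open NALocalField

theorem IsStandardChar.map_mul_add_quadratic {K : Type} [Field K] [TopologicalSpace K]
    [NALocalField K] {ψ : AddChar K ℂ} (hψ : IsStandardChar ψ)
    {ι : Type*} [Fintype ι] {lam : K} {l C m : ℤ} (hlam : ord lam = l)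
    {R : Matrix ι ι K} (hR : ∀ i j, (C : WithTop ℤ) ≤ ord (R i j)) (hm : 1 ≤ l + (C + m + m))
    {y : ι → K} (hy : y ∈ piBall K ι m) (u : K) :
    ψ (lam * (u + ∑ i, (∑ j, R i j * y j) * y i)) = ψ (lam * u) := by
  have hq : 1 ≤ ord (lam * ∑ i, (∑ j, R i j * y j) * y i) := by
    rw [ord_mul, hlam]
    calc (1 : WithTop ℤ) ≤ ((l + (C + m + m) : ℤ) : WithTop ℤ) := WithTop.coe_le_coe.2 hm
      _ ≤ _ := by rw [WithTop.coe_add]; gcongr; exact le_ord_quadratic hR hy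
  rw [mul_add, AddChar.map_add_eq_mul, hψ.1 _ hq, mul_one]

section Haar

variable {K : Type} [Field K] [TopologicalSpace K] [IsTopologicalRing K] [NALocalField K]
  [MeasurableSpace K] [BorelSpace K] {μ : Measure K}

theorem IsHaar.isAddHaarMeasure (hμ : IsHaar μ) : μ.IsAddHaarMeasure := by
  have : μ.IsAddLeftInvariant := ⟨fun a => Measure.ext fun s hs => by
    rw [Measure.map_apply (measurable_const_add a) hs, hμ.1]⟩
  have hO : μ (ball K 0) = 1 := hμ.2
  refine Measure.isAddHaarMeasure_of_isCompact_nonempty_interior μ (ball K 0) (isCompact_ball 0)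
    ?_ (by simp [hO]) (by simp [hO])
  exact ⟨0, (isOpen_ball (K := K) 0).subset_interior_iff.2 subset_rfl (ball K 0).zero_mem⟩

theorem IsHaar.isAddHaarMeasure_piHaar (hμ : IsHaar μ) (ι : Type) [Fintype ι] :
    (piHaar μ ι).IsAddHaarMeasure := by
  have := hμ.isAddHaarMeasure
  unfold piHaar
  infer_instance

end Haar

namespace MeasureTheory

variable {G : Type*} [AddGroup G] [MeasurableSpace G] {μ : Measure G}

theorem setIntegral_addChar_eq_zero [MeasurableAdd G] [μ.IsAddRightInvariant]
    (H : AddSubgroup G) (χ : AddChar G ℂ) {y₀ : G} (hy₀ : y₀ ∈ H) (hχ : χ y₀ ≠ 1) :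
    ∫ y in H, χ y ∂μ = 0 := by
  have hpre : (· + y₀) ⁻¹' (H : Set G) = H := by
    ext y
    exact H.add_mem_cancel_right hy₀
  have htrans : ∫ y in H, χ y ∂μ = (∫ y in H, χ y ∂μ) * χ y₀ :=
    calc ∫ y in H, χ y ∂μ = ∫ y in H, χ (y + y₀) ∂μ := by
          rw [← (measurePreserving_add_right μ y₀).setIntegral_preimage_emb
            (measurableEmbedding_addRight y₀), hpre]
      _ = (∫ y in H, χ y ∂μ) * χ y₀ := by
          simp only [AddChar.map_add_eq_mul, integral_mul_const]
  by_contra h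
  exact hχ ((mul_eq_left₀ h).1 htrans.symm)

theorem setIntegral_comp_add_eq_zero_of_eq_mul_addChar [MeasurableAdd G]
    [μ.IsAddRightInvariant] {W : AddSubgroup G} (hW : MeasurableSet (W : Set G)) {f : G → ℂ}
    {x : G} (χ : AddChar G ℂ) (hf : ∀ y ∈ W, f (x + y) = f x * χ y) {y₀ : G} (hy₀ : y₀ ∈ W)
    (hχ : χ y₀ ≠ 1) : ∫ y in W, f (x + y) ∂μ = 0 := by
  rw [setIntegral_congr_fun hW hf, integral_const_mul, setIntegral_addChar_eq_zero W χ hy₀ hχ,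
    mul_zero]

-- Fubini for `(y, x) ↦ 1_W(y) f(x + y)`: integrating first in `x` gives `μ W • ∫ f`, first
-- in `y` gives `0`.
theorem integral_eq_zero_of_forall_setIntegral_add_eq_zero [MeasurableAdd₂ G] [SFinite μ]
    [μ.IsAddRightInvariant] {E : Type*} [NormedAddCommGroup E] [NormedSpace ℝ E]
    [CompleteSpace E] {W : Set G} (hW : MeasurableSet W) (hW₀ : μ W ≠ 0) (hW_top : μ W ≠ ⊤)
    {f : G → E} (hf : ∀ x, ∫ y in W, f (x + y) ∂μ = 0) : ∫ x, f x ∂μ = 0 := by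
  by_cases hfi : Integrable f μ
  swap
  · exact integral_undef hfi
  set F : G × G → E := fun z => W.indicator (fun y => f (z.2 + y)) z.1
  have hF : Integrable F (μ.prod μ) := by
    have h := (integrableOn_const hW_top (C := (1 : ℝ))).integrable_indicator hW |>.smul_prod hfi
    have hshear : F = (fun z => W.indicator (fun _ => (1 : ℝ)) z.1 • f z.2) ∘
        fun z => (z.1, z.2 + z.1) := by
      ext ⟨y, x⟩
      by_cases hy : y ∈ W <;> simp [F, hy]
    rw [hshear]
    exact ((measurePreserving_prod_add_right μ μ).integrable_comp h.aestronglyMeasurable).2 h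
  have hswap := integral_integral_swap (f := fun y x => F (y, x)) hF
  have hleft (y : G) : ∫ x, F (y, x) ∂μ = W.indicator (fun _ => ∫ x, f x ∂μ) y := by
    by_cases hy : y ∈ W <;> simp [F, hy, integral_add_right_eq_self]
  have hright (x : G) : ∫ y, F (y, x) ∂μ = 0 := (integral_indicator hW).trans (hf x)
  simp only [hleft, hright, integral_zero] at hswap
  rw [integral_indicator_const _ hW] at hswap
  exact (smul_eq_zero.1 hswap).resolve_left (ENNReal.toReal_ne_zero.2 ⟨hW₀, hW_top⟩)

end MeasureTheory

theorem stationary_phase_general {K : Type} [Field K] [TopologicalSpace K] [IsTopologicalRing K]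
    [NALocalField K] [MeasurableSpace K] [BorelSpace K]
    (μ : Measure K) (hμ : IsHaar μ) (ψ : AddChar K ℂ) (hψ : IsStandardChar ψ)
    {n r : ℕ} (X : Set (Fin n → K)) (V : Set (Fin r → K))
    (p : (Fin n → K) → (Fin r → K) → K)
    (φ : (Fin n → K) → ℂ) (hφ : IsSBOn X φ)
    (G : (Fin n → K) → (Fin r → K) → Fin n → K)
    (R : (Fin n → K) → (Fin n → K) → (Fin r → K) → Matrix (Fin n) (Fin n) K)
    (hTaylor : ∀ (x y : Fin n → K), ∀ η ∈ V, x ∈ X → x + y ∈ X →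
        p (x + y) η = p x η + (∑ i, G x η i * y i) + ∑ i, (∑ j, R x y η i j * y j) * y i)
    (δ : ℤ) (hG : ∀ x ∈ tsupport φ, ∀ η ∈ V, ordVec (G x η) ≤ (δ : WithTop ℤ))
    (C : ℤ) (hR : ∀ (x y : Fin n → K), ∀ η ∈ V, x ∈ tsupport φ → x + y ∈ tsupport φ →
        ∀ i j : Fin n, (C : WithTop ℤ) ≤ NALocalField.ord (R x y η i j)) :
    ∃ r₀ : ℤ, ∀ η ∈ V, ∀ lam : K, lam ≠ 0 →
      (∫ x, φ x * ψ (lam * p x η) ∂(piHaar μ (Fin n))) ≠ 0 →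
        (r₀ : WithTop ℤ) ≤ NALocalField.ord lam := by
  obtain ⟨hlc, hcs, hsupp⟩ := hφ
  have := hμ.isAddHaarMeasure_piHaar (Fin n)
  obtain ⟨m₀, hm₀⟩ := hlc.exists_piBall_forall_add_eq hcs
  -- For `ord lam = l < r₀`, the radius `m = -(l + δ)` has `m₀ ≤ m` and `1 ≤ l + (C + m + m)`.
  refine ⟨min (C - 1 - 2 * δ) (-δ - m₀), fun η hη lam hlam hI => ?_⟩
  obtain ⟨l, hl⟩ := exists_ord_eq_coe hlam
  rw [hl, WithTop.coe_le_coe]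
  by_contra hl_lt
  set W := piBall K (Fin n) (-(l + δ))
  have hconst : ∀ x, ∀ y ∈ W, φ (x + y) = φ x :=
    fun x y hy => hm₀ x y (piBall_antitone (by omega) hy)
  refine hI (integral_eq_zero_of_forall_setIntegral_add_eq_zero (isOpen_piBall _).measurableSet
    ((isOpen_piBall _).measure_ne_zero _ ⟨0, W.zero_mem⟩)
    (isCompact_piBall _).measure_ne_top fun x => ?_)
  by_cases hx₀ : φ x = 0
  · refine setIntegral_eq_zero_of_forall_eq_zero fun y hy => ?_
    rw [hconst x y hy, hx₀, zero_mul]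
  have hx : x ∈ tsupport φ := subset_tsupport φ hx₀
  obtain ⟨z₀, hz₀, hψz₀⟩ := hψ.2
  obtain ⟨y₀, hy₀, hy₀z⟩ := exists_mem_piBall_mul_dotProduct_eq hl (hG x hx η hη) hz₀
  refine setIntegral_comp_add_eq_zero_of_eq_mul_addChar (μ := piHaar μ (Fin n))
    (f := fun x => φ x * ψ (lam * p x η)) (isOpen_piBall _).measurableSet
    (ψ.mulDotProduct lam (G x η)) (fun y hy => ?_) hy₀ (by rwa [AddChar.mulDotProduct_apply, hy₀z])
  have hxy : x + y ∈ tsupport φ :=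
    subset_tsupport φ (by rwa [Function.mem_support, hconst x y hy])
  rw [hconst x y hy, hTaylor x y η hη (hsupp hx) (hsupp hxy),
    hψ.map_mul_add_quadratic hl (hR x y η hη hx hxy) (m := -(l + δ)) (by omega) hy,
    mul_add, AddChar.map_add_eq_mul, AddChar.mulDotProduct_apply, mul_assoc]
  rfl

/-- non-archimedean stationary phase. Let `X ⊆ K^n` and `V ⊆ K^r` be
open, `p : X × V → K` strict `C¹`, and `φ ∈ S(X)`. Suppose `|grad_x p(x,η)| ≥ δ > 0` on
`Supp(φ) × V` (valuatively: `ordVec (G x η) ≤ δ`), and the second-order remainder matrix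
`R` in `p(x+y,η) = p(x,η) + (grad_x p(x,η)|y) + (R(x,y,η)y|y)` is bounded for `x`, `x+y`
in `Supp(φ)` and `η ∈ V` (valuatively: `ord` of the entries is bounded below). Then there
is `r₀ ∈ ℤ`, independent of `η ∈ V`, such that for every `η ∈ V` the function
`λ ↦ ∫_X φ(x) ψ(λ p(x,η)) dx` on `K^×` is supported in the ball `B_{r₀}`. -/
theorem stationary_phase {K : Type} [Field K] [TopologicalSpace K] [IsTopologicalRing K]
    [NALocalField K] [MeasurableSpace K] [BorelSpace K]
    (μ : Measure K) (hμ : IsHaar μ) (ψ : AddChar K ℂ) (hψ : IsStandardChar ψ)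
    {n r : ℕ} (X : Set (Fin n → K)) (V : Set (Fin r → K)) (hX : IsOpen X) (hV : IsOpen V)
    (p : (Fin n → K) → (Fin r → K) → K) (hp : StrictC1Pair p X V)
    (φ : (Fin n → K) → ℂ) (hφ : IsSBOn X φ)
    (G : (Fin n → K) → (Fin r → K) → Fin n → K)
    (R : (Fin n → K) → (Fin n → K) → (Fin r → K) → Matrix (Fin n) (Fin n) K)
    (hTaylor : ∀ (x y : Fin n → K), ∀ η ∈ V, x ∈ X → x + y ∈ X →
        p (x + y) η = p x η + (∑ i, G x η i * y i) + ∑ i, (∑ j, R x y η i j * y j) * y i)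
    (δ : ℤ) (hG : ∀ x ∈ tsupport φ, ∀ η ∈ V, ordVec (G x η) ≤ (δ : WithTop ℤ))
    (C : ℤ) (hR : ∀ (x y : Fin n → K), ∀ η ∈ V, x ∈ tsupport φ → x + y ∈ tsupport φ →
        ∀ i j : Fin n, (C : WithTop ℤ) ≤ NALocalField.ord (R x y η i j)) :
    ∃ r₀ : ℤ, ∀ η ∈ V, ∀ lam : K, lam ≠ 0 →
      (∫ x, φ x * ψ (lam * p x η) ∂(piHaar μ (Fin n))) ≠ 0 →
        (r₀ : WithTop ℤ) ≤ NALocalField.ord lam :=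
  stationary_phase_general μ hμ ψ hψ X V p φ hφ G R hTaylor δ hG C hR
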